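/- arXiv:2302.00296 — 3 statements merged into one kernel-verified Lean document; each statement's English description precedes it below -/
import Mathlib

section
/- Let K(x) := |x|^{2-d} for d ≥ 3 (or K(x) := -log|x| for d = 2) on ℝ^d \ {0}. For any N ≥ 2 and pairwise distinct x^{(1)},...,x^{(N)} ∈ ℝ^d, one has ∑_{i,j,k: j≠i, k≠i} ⟨n(x^{(i)}-x^{(j)}), ∇K(x^{(i)}-x^{(k)})⟩ ≤ ∑_{i,j: j≠i} ⟨n(x^{(i)}-x^{(j)}), ∇K(x^{(i)}-x^{(j)})⟩, where n(u) := u/|u|. -/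
open Finset Real InnerProductGeometry

/-!
Off the origin both kernels have `∇K(u) = -c ‖u‖⁻ᵈ u` with `c = max 1 (d - 2) > 0`. Dividing by
`-c`, the claim becomes: for the radial field `w(‖v‖) v` with `w ≥ 0`, the triple sum of
`⟪n(xᵢ - xⱼ), w(‖xᵢ - xₖ‖) (xᵢ - xₖ)⟫` dominates its diagonal `k = j`. Pair each off-diagonal term
with its image under `i ↔ k`: the pair is `w(‖xᵢ - xₖ‖) ‖xᵢ - xₖ‖` times the sum of the cosines of
the angles at `xᵢ` and `xₖ` of the triangle `xᵢ xₖ xⱼ`, which is nonnegative because these two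
angles add up to at most `π`.
-/

section Gradient

variable {E : Type*} [NormedAddCommGroup E] [InnerProductSpace ℝ E]

theorem hasFDerivAt_norm_rpow_of_ne_zero {x : E} (hx : x ≠ 0) (p : ℝ) :
    HasFDerivAt (fun x : E ↦ ‖x‖ ^ p) ((p * ‖x‖ ^ (p - 2)) • innerSL ℝ x) x := by
  convert! ((hasStrictFDerivAt_norm_sq x).rpow_const (p := p / 2) (by simp [hx])).hasFDerivAt
    using 0
  simp_rw [← Real.rpow_natCast_mul (norm_nonneg _), ← Nat.cast_smul_eq_nsmul ℝ, smul_smul]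
  ring_nf

theorem hasFDerivAt_log_norm {x : E} (hx : x ≠ 0) :
    HasFDerivAt (fun x : E ↦ log ‖x‖) ((‖x‖ ^ 2)⁻¹ • innerSL ℝ x) x := by
  convert! ((hasStrictFDerivAt_norm_sq x).hasFDerivAt.log (by simp [hx])).const_mul (1 / 2)
    using 1
  · ext y
    simp [Real.log_pow]
  · rw [← Nat.cast_smul_eq_nsmul ℝ, smul_smul, smul_smul]
    congr 1
    ring

variable [CompleteSpace E]

theorem hasGradientAt_norm_rpow_of_ne_zero {x : E} (hx : x ≠ 0) (p : ℝ) :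
    HasGradientAt (fun x : E ↦ ‖x‖ ^ p) ((p * ‖x‖ ^ (p - 2)) • x) x := by
  rw [hasGradientAt_iff_hasFDerivAt, map_smul]
  exact hasFDerivAt_norm_rpow_of_ne_zero hx p

theorem hasGradientAt_neg_log_norm {x : E} (hx : x ≠ 0) :
    HasGradientAt (fun x : E ↦ -log ‖x‖) (-(‖x‖ ^ 2)⁻¹ • x) x := by
  rw [hasGradientAt_iff_hasFDerivAt, map_smul, neg_smul]
  exact (hasFDerivAt_log_norm hx).neg

end Gradient

theorem gradient_coulomb_kernel {d : ℕ} {K : EuclideanSpace ℝ (Fin d) → ℝ}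
    (hK : (3 ≤ d ∧ ∀ u : EuclideanSpace ℝ (Fin d), u ≠ 0 → K u = ‖u‖ ^ ((2 : ℝ) - d)) ∨
          (d = 2 ∧ ∀ u : EuclideanSpace ℝ (Fin d), u ≠ 0 → K u = -log ‖u‖))
    {u : EuclideanSpace ℝ (Fin d)} (hu : u ≠ 0) :
    gradient K u = -((max 1 ((d : ℝ) - 2) * ‖u‖ ^ (-(d : ℝ))) • u) := by
  have near {f : EuclideanSpace ℝ (Fin d) → ℝ} (hf : ∀ v, v ≠ 0 → K v = f v) :
      K =ᶠ[nhds u] f :=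
    (isOpen_ne.eventually_mem hu).mono hf
  rcases hK with ⟨hd, hK⟩ | ⟨rfl, hK⟩
  · rw [((hasGradientAt_norm_rpow_of_ne_zero hu _).congr_of_eventuallyEq (near hK)).gradient,
      max_eq_right (by norm_cast; lia), ← neg_smul]
    ring_nf
  · rw [((hasGradientAt_neg_log_norm hu).congr_of_eventuallyEq (near hK)).gradient]
    norm_num [rpow_neg]

theorem Real.cos_add_cos_nonneg_of_add_le_pi {α β : ℝ} (hα : 0 ≤ α) (hβ : 0 ≤ β)
    (hαβ : α + β ≤ π) : 0 ≤ cos α + cos β := by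
  have := cos_le_cos_of_nonneg_of_le_pi hα (by linarith) (show α ≤ π - β by linarith)
  rw [cos_pi_sub] at this
  linarith

section Triangle

variable {E : Type*} [NormedAddCommGroup E] [InnerProductSpace ℝ E]

theorem InnerProductGeometry.inner_inv_norm_smul_left_eq_norm_mul_cos_angle (u v : E) :
    inner ℝ (‖u‖⁻¹ • u) v = ‖v‖ * cos (angle u v) := by
  rcases eq_or_ne u 0 with rfl | hu
  · simp
  rw [real_inner_smul_left, ← cos_angle_mul_norm_mul_norm]
  field_simp

theorem InnerProductGeometry.cos_angle_sub_add_cos_angle_sub_nonneg (a b p : E) :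
    0 ≤ cos (angle (a - p) (a - b)) + cos (angle (b - p) (b - a)) := by
  rcases eq_or_ne a p with rfl | hap
  · rw [sub_self, angle_zero_left, cos_pi_div_two, zero_add, cos_angle]
    exact div_nonneg real_inner_self_nonneg (by positivity)
  apply cos_add_cos_nonneg_of_add_le_pi (angle_nonneg _ _) (angle_nonneg _ _)
  have hsum := angle_add_angle_sub_add_angle_sub_eq_pi (a - b) (sub_ne_zero.2 hap)
  rw [sub_sub_sub_cancel_left, sub_sub_sub_cancel_left] at hsum
  rw [← angle_neg_neg (b - p), neg_sub, neg_sub, angle_comm, angle_comm (p - b)]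
  linarith [angle_nonneg (a - p) (b - p)]

theorem inner_inv_norm_smul_sub_add_inner_inv_norm_smul_sub_nonneg (a b p : E) :
    0 ≤ inner ℝ (‖a - p‖⁻¹ • (a - p)) (a - b) + inner ℝ (‖b - p‖⁻¹ • (b - p)) (b - a) := by
  rw [inner_inv_norm_smul_left_eq_norm_mul_cos_angle,
    inner_inv_norm_smul_left_eq_norm_mul_cos_angle, norm_sub_rev b, ← mul_add]
  exact mul_nonneg (norm_nonneg _) (cos_angle_sub_add_cos_angle_sub_nonneg a b p)

end Triangle

section Combinatorics

variable {ι : Type*} [Fintype ι]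

theorem sum_sum_sum_nonneg_of_add_swap_nonneg (f : ι → ι → ι → ℝ)
    (hf : ∀ i j k, 0 ≤ f i j k + f k j i) : 0 ≤ ∑ i, ∑ j, ∑ k, f i j k := by
  have hswap : ∑ i, ∑ j, ∑ k, f k j i = ∑ i, ∑ j, ∑ k, f i j k := by
    calc ∑ i, ∑ j, ∑ k, f k j i = ∑ i, ∑ k, ∑ j, f k j i := sum_congr rfl fun _ _ => sum_comm
      _ = ∑ k, ∑ i, ∑ j, f k j i := sum_comm
      _ = ∑ k, ∑ j, ∑ i, f k j i := sum_congr rfl fun _ _ => sum_comm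
  have hpair : 0 ≤ ∑ i, ∑ j, ∑ k, (f i j k + f k j i) :=
    sum_nonneg fun i _ => sum_nonneg fun j _ => sum_nonneg fun k _ => hf i j k
  simp only [sum_add_distrib, hswap] at hpair
  linarith

variable [DecidableEq ι]

theorem sum_sum_diag_le_sum_sum_sum_of_add_swap_nonneg (f : ι → ι → ι → ℝ)
    (hf : ∀ i j k, j ≠ i → k ≠ i → k ≠ j → 0 ≤ f i j k + f k j i) :
    ∑ i, ∑ j ∈ univ.filter (· ≠ i), f i j j ≤
      ∑ i, ∑ j ∈ univ.filter (· ≠ i), ∑ k ∈ univ.filter (· ≠ i), f i j k := by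
  set g : ι → ι → ι → ℝ := fun i j k => if j ≠ i ∧ k ≠ i ∧ k ≠ j then f i j k else 0
  have hsplit : ∀ i, ∀ j ∈ univ.filter (· ≠ i),
      ∑ k ∈ univ.filter (· ≠ i), f i j k = f i j j + ∑ k, g i j k := by
    intro i j hj
    rw [← add_sum_erase _ _ hj, ← filter_ne', filter_filter, sum_filter]
    simp only [mem_filter] at hj
    simp [g, hj.2]
  have hdiag : ∑ i, ∑ j ∈ univ.filter (· ≠ i), ∑ k, g i j k = ∑ i, ∑ j, ∑ k, g i j k :=
    sum_congr rfl fun i _ => sum_filter_of_ne fun j _ hne => by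
      contrapose! hne
      simp [g, hne]
  have hoff : 0 ≤ ∑ i, ∑ j, ∑ k, g i j k := by
    refine sum_sum_sum_nonneg_of_add_swap_nonneg g fun i j k => ?_
    by_cases h : j ≠ i ∧ k ≠ i ∧ k ≠ j
    · simp only [g, if_pos h, if_pos (show j ≠ k ∧ i ≠ k ∧ i ≠ j by tauto)]
      exact hf i j k h.1 h.2.1 h.2.2
    · simp only [g, if_neg h, if_neg (show ¬(j ≠ k ∧ i ≠ k ∧ i ≠ j) by tauto), add_zero, le_refl]
  rw [sum_congr rfl fun i _ => sum_congr rfl (hsplit i)]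
  simp only [sum_add_distrib, hdiag]
  linarith

end Combinatorics

theorem sum_sum_inner_radial_le {ι E : Type*} [Fintype ι] [DecidableEq ι]
    [NormedAddCommGroup E] [InnerProductSpace ℝ E] (w : ℝ → ℝ) (hw : ∀ r, 0 ≤ r → 0 ≤ w r)
    (x : ι → E) :
    ∑ i, ∑ j ∈ univ.filter (· ≠ i),
        inner ℝ (‖x i - x j‖⁻¹ • (x i - x j)) (w ‖x i - x j‖ • (x i - x j)) ≤
      ∑ i, ∑ j ∈ univ.filter (· ≠ i), ∑ k ∈ univ.filter (· ≠ i),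
        inner ℝ (‖x i - x j‖⁻¹ • (x i - x j)) (w ‖x i - x k‖ • (x i - x k)) := by
  refine sum_sum_diag_le_sum_sum_sum_of_add_swap_nonneg
    (fun i j k => inner ℝ (‖x i - x j‖⁻¹ • (x i - x j)) (w ‖x i - x k‖ • (x i - x k)))
    fun i j k _ _ _ => ?_
  rw [real_inner_smul_right, real_inner_smul_right, norm_sub_rev (x k), ← mul_add]
  exact mul_nonneg (hw _ (norm_nonneg _))
    (inner_inv_norm_smul_sub_add_inner_inv_norm_smul_sub_nonneg (x i) (x k) (x j))

open Finset in
theorem coulomb_interaction_triple_sum_le_general (d N : ℕ)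
    (K : EuclideanSpace ℝ (Fin d) → ℝ)
    (hK : (3 ≤ d ∧ ∀ u : EuclideanSpace ℝ (Fin d), u ≠ 0 → K u = ‖u‖ ^ ((2 : ℝ) - d)) ∨
          (d = 2 ∧ ∀ u : EuclideanSpace ℝ (Fin d), u ≠ 0 → K u = -Real.log ‖u‖))
    (x : Fin N → EuclideanSpace ℝ (Fin d)) (hx : Function.Injective x) :
    ∑ i : Fin N, ∑ j ∈ univ.filter (fun j => j ≠ i), ∑ k ∈ univ.filter (fun k => k ≠ i),
        (inner ℝ (‖x i - x j‖⁻¹ • (x i - x j)) (gradient K (x i - x k)) : ℝ)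
      ≤ ∑ i : Fin N, ∑ j ∈ univ.filter (fun j => j ≠ i),
        (inner ℝ (‖x i - x j‖⁻¹ • (x i - x j)) (gradient K (x i - x j)) : ℝ) := by
  have hgrad : ∀ i k : Fin N, k ∈ univ.filter (· ≠ i) → gradient K (x i - x k) =
      -((max 1 ((d : ℝ) - 2) * ‖x i - x k‖ ^ (-(d : ℝ))) • (x i - x k)) := fun i k hk =>
    gradient_coulomb_kernel hK (sub_ne_zero.2 (hx.ne (mem_filter.1 hk).2.symm))
  have hw : ∀ r : ℝ, 0 ≤ r → 0 ≤ max 1 ((d : ℝ) - 2) * r ^ (-(d : ℝ)) := fun r hr =>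
    mul_nonneg (le_max_of_le_left zero_le_one) (rpow_nonneg hr _)
  simp +contextual only [hgrad, inner_neg_right, sum_neg_distrib, neg_le_neg_iff]
  exact sum_sum_inner_radial_le _ hw x

open Finset in
theorem coulomb_interaction_triple_sum_le (d N : ℕ) (hd : 2 ≤ d) (hN : 2 ≤ N)
    (K : EuclideanSpace ℝ (Fin d) → ℝ)
    (hK : (3 ≤ d ∧ ∀ u : EuclideanSpace ℝ (Fin d), u ≠ 0 → K u = ‖u‖ ^ ((2 : ℝ) - d)) ∨
          (d = 2 ∧ ∀ u : EuclideanSpace ℝ (Fin d), u ≠ 0 → K u = -Real.log ‖u‖))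
    (x : Fin N → EuclideanSpace ℝ (Fin d)) (hx : Function.Injective x) :
    ∑ i : Fin N, ∑ j ∈ univ.filter (fun j => j ≠ i), ∑ k ∈ univ.filter (fun k => k ≠ i),
        (inner ℝ (‖x i - x j‖⁻¹ • (x i - x j)) (gradient K (x i - x k)) : ℝ)
      ≤ ∑ i : Fin N, ∑ j ∈ univ.filter (fun j => j ≠ i),
        (inner ℝ (‖x i - x j‖⁻¹ • (x i - x j)) (gradient K (x i - x j)) : ℝ) :=
  coulomb_interaction_triple_sum_le_general d N K hK x hx
end

section
/- Let U : D ⊆ ℝ^n → ℝ be C² with D open, suppose U is bounded below with U(x) → +∞ as x → ∂D or |x| → ∞, and suppose there is C_U > 0 with U(x)(1 + ‖∇²U(x)‖) ≤ C_U (1 + |∇U(x)|²) for all x ∈ D. Then: (a) there exists r₀ > 0 such that |∇U(x)| ≥ 1 whenever U(x) ≥ r₀; and (b) there exist constants C*, R* > 0 such that U(x)(1 + ‖∇²U(x)‖)/|∇U(x)|² ≤ C* whenever U(x) ≥ R*. -/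
/-- For `U : D → ℝ` (`D` open), bounded below, with `U(x) → +∞` as `x → ∂D` or `|x| → ∞`
(encoded by compactness of the sublevel sets `{x ∈ D | U x ≤ c}`), satisfying
`U (1 + ‖∇²U‖) ≤ C_U (1 + |∇U|²)` on `D`, the gradient is eventually at least 1 on high
level sets and the ratio `U (1 + ‖∇²U‖)/|∇U|²` is bounded on high level sets. -/
theorem gradient_large_on_high_level_sets (n : ℕ) (D : Set (EuclideanSpace ℝ (Fin n)))
    (hD : IsOpen D) (U : EuclideanSpace ℝ (Fin n) → ℝ)
    (hU : ContDiffOn ℝ 2 U D)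
    (hbdd : BddBelow (U '' D))
    (hproper : ∀ c : ℝ, IsCompact {x ∈ D | U x ≤ c})
    (C_U : ℝ) (hC_U : 0 < C_U)
    (hbound : ∀ x ∈ D, U x * (1 + ‖iteratedFDeriv ℝ 2 U x‖) ≤ C_U * (1 + ‖gradient U x‖ ^ 2)) :
    (∃ r₀ > (0 : ℝ), ∀ x ∈ D, r₀ ≤ U x → 1 ≤ ‖gradient U x‖) ∧
    (∃ Cstar > (0 : ℝ), ∃ Rstar > (0 : ℝ), ∀ x ∈ D, Rstar ≤ U x →
      U x * (1 + ‖iteratedFDeriv ℝ 2 U x‖) / ‖gradient U x‖ ^ 2 ≤ Cstar) := by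
  have key : ∀ x ∈ D, 2 * C_U ≤ U x → 1 ≤ ‖gradient U x‖ := by
    intro x hx hUx
    have hb := hbound x hx
    have hH : (0 : ℝ) ≤ ‖iteratedFDeriv ℝ 2 U x‖ := norm_nonneg _
    have hg : (0 : ℝ) ≤ ‖gradient U x‖ := norm_nonneg _
    have hU0 : (0:ℝ) ≤ U x := by linarith
    by_contra h
    push_neg at h
    have hsq : ‖gradient U x‖ ^ 2 < 1 := by nlinarith
    nlinarith [mul_nonneg hU0 hH]
  refine ⟨⟨2 * C_U, by linarith, key⟩, 2 * C_U, by linarith, 2 * C_U, by linarith, ?_⟩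
  intro x hx hUx
  have hg := key x hx hUx
  have hb := hbound x hx
  have hg2 : (0 : ℝ) < ‖gradient U x‖ ^ 2 := by positivity
  rw [div_le_iff₀ hg2]
  have hgs : (1:ℝ) ≤ ‖gradient U x‖ ^ 2 := by nlinarith
  nlinarith [mul_le_mul_of_nonneg_left hgs hC_U.le]
end

section
/- Let D be the set of pairwise-distinct configurations x ∈ (ℝ^d)^N, let α ≥ 2, β > 0 and C₁, C₂, C₄ > 0, and define G(x) := (C₁|x|^{α-1} + C₂ ∑_{1≤i<j≤N} |x^{(i)}-x^{(j)}|^{-β-1})² and H(x) := C₄(1 + (N-1)N/2 + |x|^α + ∑_{1≤i<j≤N} |x^{(i)}-x^{(j)}|^{-β} 1_{|x^{(i)}-x^{(j)}| ≤ 1}). Then sup_{x ∈ D} H(x)/G(x), restricted to the region where G(x) ≥ 1, is finite. -/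
set_option maxHeartbeats 1000000 in
open Finset in
theorem ratio_bound_on_large_gradient_region (d N : ℕ) (α β C₁ C₂ C₄ : ℝ)
    (hα : 2 ≤ α) (hβ : 0 < β) (hC₁ : 0 < C₁) (hC₂ : 0 < C₂) (hC₄ : 0 < C₄) :
    ∃ C : ℝ, ∀ x : PiLp 2 (fun _ : Fin N => EuclideanSpace ℝ (Fin d)),
      Function.Injective x →
      1 ≤ (C₁ * ‖x‖ ^ (α - 1)
            + C₂ * ∑ i : Fin N, ∑ j ∈ univ.filter (fun j => i < j), ‖x i - x j‖ ^ (-β - 1)) ^ 2 →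
      (C₄ * (1 + ((N : ℝ) - 1) * N / 2 + ‖x‖ ^ α
            + ∑ i : Fin N, ∑ j ∈ univ.filter (fun j => i < j),
                (if ‖x i - x j‖ ≤ 1 then ‖x i - x j‖ ^ (-β) else 0)))
        / (C₁ * ‖x‖ ^ (α - 1)
            + C₂ * ∑ i : Fin N, ∑ j ∈ univ.filter (fun j => i < j), ‖x i - x j‖ ^ (-β - 1)) ^ 2
        ≤ C := by
  refine ⟨C₄ * (2 + ((N : ℝ) - 1) * N / 2 + 1 / C₁ ^ 2 + 1 / C₂), fun x hinj hS2 => ?_⟩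
  set a : ℝ := ‖x‖ ^ (α - 1) with ha_def
  set T : ℝ := ∑ i : Fin N, ∑ j ∈ univ.filter (fun j => i < j), ‖x i - x j‖ ^ (-β - 1) with hT_def
  set I : ℝ := ∑ i : Fin N, ∑ j ∈ univ.filter (fun j => i < j),
      (if ‖x i - x j‖ ≤ 1 then ‖x i - x j‖ ^ (-β) else 0) with hI_def
  have ha : 0 ≤ a := by rw [ha_def]; positivity
  have hT : 0 ≤ T := by
    rw [hT_def]
    exact Finset.sum_nonneg fun i _ => Finset.sum_nonneg fun j _ =>
      Real.rpow_nonneg (norm_nonneg _) _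
  have hIT : I ≤ T := by
    rw [hI_def, hT_def]
    apply Finset.sum_le_sum; intro i _
    apply Finset.sum_le_sum; intro j hj
    have hij : i < j := (Finset.mem_filter.mp hj).2
    have hne : x i ≠ x j := fun h => (ne_of_lt hij) (hinj h)
    have hr : 0 < ‖x i - x j‖ := by
      rw [norm_pos_iff]; exact sub_ne_zero.mpr hne
    split_ifs with h1
    · exact Real.rpow_le_rpow_of_exponent_ge hr h1 (by linarith)
    · positivity
  clear_value a T I
  have hxn : (0:ℝ) ≤ ‖x‖ := norm_nonneg x
  have hS0 : 0 ≤ C₁ * a + C₂ * T :=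
    add_nonneg (mul_nonneg hC₁.le ha) (mul_nonneg hC₂.le hT)
  have hS1 : 1 ≤ C₁ * a + C₂ * T := by nlinarith
  have hn : (0:ℝ) ≤ ((N : ℝ) - 1) * N / 2 := by
    have : (N:ℝ) ≤ (N:ℝ) * N := by
      have := Nat.cast_nonneg (α := ℝ) N
      rcases Nat.eq_zero_or_pos N with h | h
      · simp [h]
      · have h1 : (1:ℝ) ≤ N := by exact_mod_cast h
        nlinarith
    nlinarith
  have hxα : ‖x‖ ^ α ≤ 1 + a ^ 2 := by
    rcases le_or_gt ‖x‖ 1 with h | h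
    · have := Real.rpow_le_one hxn h (by linarith : (0:ℝ) ≤ α)
      nlinarith [sq_nonneg a]
    · have h1 : (1:ℝ) ≤ ‖x‖ := h.le
      have h2 : ‖x‖ ^ α ≤ ‖x‖ ^ ((α - 1) * 2) :=
        Real.rpow_le_rpow_of_exponent_le h1 (by linarith)
      have h3 : ‖x‖ ^ ((α - 1) * 2) = a ^ 2 := by
        rw [ha_def, Real.rpow_mul hxn]
        norm_num [Real.rpow_natCast]
      nlinarith
  set S : ℝ := C₁ * a + C₂ * T with hS_def
  clear_value S
  have hSpos : (0:ℝ) < S := lt_of_lt_of_le one_pos hS1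
  have hSq1 : 1 ≤ S ^ 2 := by nlinarith
  have ha2 : a ^ 2 ≤ S ^ 2 / C₁ ^ 2 := by
    rw [le_div_iff₀ (by positivity : (0:ℝ) < C₁ ^ 2), hS_def]
    nlinarith [mul_nonneg (mul_nonneg hC₁.le ha) (mul_nonneg hC₂.le hT), sq_nonneg (C₂ * T)]
  have hCTS : C₂ * T ≤ S := by
    rw [hS_def]; nlinarith [mul_nonneg hC₁.le ha]
  have hTS : T ≤ S ^ 2 / C₂ := by
    rw [le_div_iff₀ hC₂]
    nlinarith
  rw [div_le_iff₀ (by positivity : (0:ℝ) < S ^ 2)]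
  have key : 1 + ((N : ℝ) - 1) * N / 2 + ‖x‖ ^ α + I
      ≤ (2 + ((N : ℝ) - 1) * N / 2 + 1 / C₁ ^ 2 + 1 / C₂) * S ^ 2 := by
    have h1 : I ≤ S ^ 2 / C₂ := hIT.trans hTS
    have h2 : ‖x‖ ^ α ≤ 1 + S ^ 2 / C₁ ^ 2 := by linarith
    have h3 : (1 / C₁ ^ 2) * S ^ 2 = S ^ 2 / C₁ ^ 2 := by ring
    have h4 : (1 / C₂) * S ^ 2 = S ^ 2 / C₂ := by ring
    nlinarith [mul_le_mul_of_nonneg_left hSq1 hn]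
  nlinarith [mul_le_mul_of_nonneg_left key hC₄.le]
end
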